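/- arXiv:1606.01753 — 8 statements merged into one kernel-verified Lean document; each statement's English description precedes it below -/
import Mathlib

section
/- If a pair of n-bit inputs (a,b) generates a carry chain from i to j and also a carry chain from p to q, and (i,j) ≠ (p,q), then the integer intervals [i,j] and [p,q] are disjoint; that is, distinct carry chains generated by the same input pair do not overlap. -/
/-- The carry sequence: `c 0 = false` and
`c (k+1) = (a k ∧ b k) ∨ (a k ∧ c k) ∨ (b k ∧ c k)`. -/
def carry (a b : ℕ → Bool) : ℕ → Bool
  | 0 => false
  | k + 1 => (a k && b k) || (a k && carry a b k) || (b k && carry a b k)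

/-- The true sum bits: `s k = a k ⊕ b k ⊕ c k`. -/
def sumBit (a b : ℕ → Bool) (k : ℕ) : Bool :=
  Bool.xor (Bool.xor (a k) (b k)) (carry a b k)

/-- `(a,b)` generates a carry chain from `i` to `j` (for `1 ≤ i ≤ j ≤ n`):
`a (i-1) = b (i-1) = true`, `a k ≠ b k` for `i ≤ k ≤ j-1`, and `a j = b j`. -/
def IsCarryChain (n : ℕ) (a b : ℕ → Bool) (i j : ℕ) : Prop :=
  1 ≤ i ∧ i ≤ j ∧ j ≤ n ∧ a (i - 1) = true ∧ b (i - 1) = true ∧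
    (∀ k, i ≤ k → k ≤ j - 1 → a k ≠ b k) ∧ a j = b j

/-! Both ends of a carry chain are pinned down by the bits. The position `i - 1` just before a
chain has `a = b = true`, so it cannot lie inside another chain, where `a ≠ b`; hence a chain
starting later than another one starts after that one has ended. The last position `j` has
`a j = b j`, so it cannot lie strictly inside another chain either; hence two chains with the
same start coincide. -/

namespace IsCarryChain

variable {n : ℕ} {a b : ℕ → Bool} {i j p q : ℕ}

theorem end_lt_start_of_start_lt (h₁ : IsCarryChain n a b i j) (h₂ : IsCarryChain n a b p q)
    (hip : i < p) : j < p := by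
  obtain ⟨-, -, -, -, hmid₁, -⟩ := h₁.2
  obtain ⟨hp, -, -, hap, hbp, -⟩ := h₂
  by_contra! hpj
  exact hmid₁ (p - 1) (by omega) (by omega) (hap.trans hbp.symm)

theorem end_le_end_of_start_le_end (h₁ : IsCarryChain n a b i j) (h₂ : IsCarryChain n a b p q)
    (hpj : p ≤ j) : q ≤ j := by
  obtain ⟨-, -, -, -, -, -, habj⟩ := h₁
  obtain ⟨-, -, -, -, -, hmid₂, -⟩ := h₂
  by_contra! hjq
  exact hmid₂ j hpj (by omega) habj

theorem end_eq_of_start_eq (h₁ : IsCarryChain n a b i j) (h₂ : IsCarryChain n a b i q) :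
    j = q :=
  le_antisymm (end_le_end_of_start_le_end h₂ h₁ h₂.2.1)
    (end_le_end_of_start_le_end h₁ h₂ h₁.2.1)

end IsCarryChain

theorem Finset.disjoint_Icc_Icc_of_lt {α : Type*} [Preorder α] [LocallyFiniteOrder α]
    {a b c d : α} (h : b < c) : Disjoint (Finset.Icc a b) (Finset.Icc c d) :=
  Finset.disjoint_left.2 fun _ hx hx' =>
    (Finset.mem_Icc.1 hx).2.not_gt (h.trans_le (Finset.mem_Icc.1 hx').1)

theorem distinct_carry_chains_disjoint_general
    (n : ℕ) (a b : ℕ → Bool)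
    (i j p q : ℕ)
    (h₁ : IsCarryChain n a b i j) (h₂ : IsCarryChain n a b p q)
    (hne : (i, j) ≠ (p, q)) :
    Disjoint (Finset.Icc i j) (Finset.Icc p q) := by
  rcases lt_trichotomy i p with hip | rfl | hpi
  · exact Finset.disjoint_Icc_Icc_of_lt (h₁.end_lt_start_of_start_lt h₂ hip)
  · exact (hne (by rw [h₁.end_eq_of_start_eq h₂])).elim
  · exact (Finset.disjoint_Icc_Icc_of_lt (h₂.end_lt_start_of_start_lt h₁ hpi)).symm

/-- Distinct carry chains generated by the same input pair do not overlap: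
their integer intervals `[i,j]` and `[p,q]` are disjoint. -/
theorem distinct_carry_chains_disjoint
    (n : ℕ) (hn : 1 ≤ n) (a b : ℕ → Bool)
    (ha : ∀ k, n ≤ k → a k = false) (hb : ∀ k, n ≤ k → b k = false)
    (i j p q : ℕ)
    (h₁ : IsCarryChain n a b i j) (h₂ : IsCarryChain n a b p q)
    (hne : (i, j) ≠ (p, q)) :
    Disjoint (Finset.Icc i j) (Finset.Icc p q) :=
  distinct_carry_chains_disjoint_general n a b i j p q h₁ h₂ hne
end

section
/- If a pair of n-bit inputs (a,b) generates a carry chain from i to j, then the sum bits satisfy s k = false for all k with i ≤ k ≤ j-1 and s j = true. -/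
/-! The carry generated at position `i - 1` propagates through every position where exactly one
input bit is set; there the sum bit is the negated carry, and at `j`, where the input bits agree,
it equals the carry. -/

theorem carry_succ_of_eq_true {a b : ℕ → Bool} {k : ℕ} (ha : a k = true) (hb : b k = true) :
    carry a b (k + 1) = true := by
  simp [carry, ha, hb]

theorem carry_succ_of_ne {a b : ℕ → Bool} {k : ℕ} (hab : a k ≠ b k) :
    carry a b (k + 1) = carry a b k := by
  cases ha : a k <;> cases hb : b k <;> simp_all [carry]

theorem sumBit_of_ne {a b : ℕ → Bool} {k : ℕ} (hab : a k ≠ b k) :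
    sumBit a b k = !carry a b k := by
  cases ha : a k <;> cases hb : b k <;> simp_all [sumBit]

theorem sumBit_of_eq {a b : ℕ → Bool} {k : ℕ} (hab : a k = b k) :
    sumBit a b k = carry a b k := by
  simp [sumBit, hab]

theorem carry_eq_true_of_propagate {a b : ℕ → Bool} {i j : ℕ} (hi : carry a b i = true)
    (hprop : ∀ k, i ≤ k → k < j → a k ≠ b k) {k : ℕ} (hik : i ≤ k) (hkj : k ≤ j) :
    carry a b k = true := by
  induction k, hik using Nat.le_induction with
  | base => exact hi
  | succ k hik ih =>
    rw [carry_succ_of_ne (hprop k hik hkj)]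
    exact ih (Nat.le_of_succ_le hkj)

theorem carry_chain_sum_bits_general
    (n : ℕ) (a b : ℕ → Bool)
    (i j : ℕ) (h : IsCarryChain n a b i j) :
    (∀ k, i ≤ k → k ≤ j - 1 → sumBit a b k = false) ∧ sumBit a b j = true := by
  obtain ⟨hi, hij, -, hai, hbi, hprop, haj⟩ := h
  have hprop' : ∀ k, i ≤ k → k < j → a k ≠ b k := fun k hik hkj ↦ hprop k hik (by omega)
  have hcarry_i : carry a b i = true := by
    obtain ⟨m, rfl⟩ : ∃ m, i = m + 1 := ⟨i - 1, by omega⟩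
    exact carry_succ_of_eq_true hai hbi
  have hcarry : ∀ k, i ≤ k → k ≤ j → carry a b k = true :=
    fun k hik hkj ↦ carry_eq_true_of_propagate hcarry_i hprop' hik hkj
  refine ⟨fun k hik hkj ↦ ?_, ?_⟩
  · rw [sumBit_of_ne (hprop k hik hkj), hcarry k hik (by omega), Bool.not_true]
  · rw [sumBit_of_eq haj, hcarry j hij le_rfl]

/-- If `(a,b)` generates a carry chain from `i` to `j`, then the sum bits satisfy
`s k = false` for all `i ≤ k ≤ j-1` and `s j = true`. -/
theorem carry_chain_sum_bits
    (n : ℕ) (hn : 1 ≤ n) (a b : ℕ → Bool)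
    (ha : ∀ k, n ≤ k → a k = false) (hb : ∀ k, n ≤ k → b k = false)
    (i j : ℕ) (h : IsCarryChain n a b i j) :
    (∀ k, i ≤ k → k ≤ j - 1 → sumBit a b k = false) ∧ sumBit a b j = true :=
  carry_chain_sum_bits_general n a b i j h
end

section
/- For every k with 1 ≤ k ≤ n, the carry bit c k equals true if and only if there exist i and j with 1 ≤ i ≤ k ≤ j ≤ n such that (a,b) generates a carry chain from i to j. -/
theorem carry_succ (a b : ℕ → Bool) (k : ℕ) :
    carry a b (k + 1) = if a k = b k then a k else carry a b k := by
  rw [carry]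
  cases a k <;> cases b k <;> simp

theorem carry_eq_true_iff (a b : ℕ → Bool) (k : ℕ) :
    carry a b k = true ↔
      ∃ g < k, a g = true ∧ b g = true ∧ ∀ m, g < m → m < k → a m ≠ b m := by
  induction k with
  | zero => simp [carry]
  | succ k ih =>
    rw [carry_succ]
    split_ifs with hk
    · constructor
      · intro hak
        exact ⟨k, k.lt_succ_self, hak, hk ▸ hak, fun m h₁ h₂ => by omega⟩
      · rintro ⟨g, hg, hag, hbg, hprop⟩
        obtain rfl | hgk : g = k ∨ g < k := by omega
        · exact hag
        · exact absurd hk (hprop k hgk k.lt_succ_self)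
    · rw [ih]
      constructor
      · rintro ⟨g, hg, hag, hbg, hprop⟩
        refine ⟨g, by omega, hag, hbg, fun m h₁ h₂ => ?_⟩
        obtain rfl | hmk : m = k ∨ m < k := by omega
        · exact hk
        · exact hprop m h₁ hmk
      · rintro ⟨g, hg, hag, hbg, hprop⟩
        obtain rfl | hgk : g = k ∨ g < k := by omega
        · exact absurd (hag.trans hbg.symm) hk
        · exact ⟨g, hgk, hag, hbg, fun m h₁ h₂ => hprop m h₁ (by omega)⟩

theorem Nat.exists_least_ge_of_le {p : ℕ → Prop} {k n : ℕ} (hkn : k ≤ n) (hn : p n) :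
    ∃ j, k ≤ j ∧ j ≤ n ∧ p j ∧ ∀ m, k ≤ m → m < j → ¬p m := by
  classical
  have hex : ∃ j, k ≤ j ∧ p j := ⟨n, hkn, hn⟩
  obtain ⟨hkj, hj⟩ := Nat.find_spec hex
  exact ⟨Nat.find hex, hkj, Nat.find_min' hex ⟨hkn, hn⟩, hj,
    fun m hkm hm hpm => Nat.find_min hex hm ⟨hkm, hpm⟩⟩

theorem carry_true_iff_mem_carry_chain_general
    (n : ℕ) (a b : ℕ → Bool)
    (ha : ∀ k, n ≤ k → a k = false) (hb : ∀ k, n ≤ k → b k = false)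
    (k : ℕ) (hkn : k ≤ n) :
    carry a b k = true ↔ ∃ i j, i ≤ k ∧ k ≤ j ∧ IsCarryChain n a b i j := by
  rw [carry_eq_true_iff]
  constructor
  · rintro ⟨g, hgk, hag, hbg, hprop⟩
    obtain ⟨j, hkj, hjn, hj, hfirst⟩ :=
      Nat.exists_least_ge_of_le (p := fun j => a j = b j) hkn (by rw [ha n le_rfl, hb n le_rfl])
    refine ⟨g + 1, j, hgk, hkj, by omega, by omega, hjn, hag, hbg, fun m h₁ h₂ => ?_, hj⟩
    obtain hmk | hkm := lt_or_ge m k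
    · exact hprop m h₁ hmk
    · exact hfirst m hkm (by omega)
  · rintro ⟨i, j, hik, hkj, hi, -, -, hai, hbi, hprop, -⟩
    exact ⟨i - 1, by omega, hai, hbi, fun m h₁ h₂ => hprop m (by omega) (by omega)⟩

/-- For `1 ≤ k ≤ n`, the carry bit `c k` is `true` iff `k` lies inside some carry
chain generated by `(a,b)`. -/
theorem carry_true_iff_mem_carry_chain
    (n : ℕ) (hn : 1 ≤ n) (a b : ℕ → Bool)
    (ha : ∀ k, n ≤ k → a k = false) (hb : ∀ k, n ≤ k → b k = false)
    (k : ℕ) (hk1 : 1 ≤ k) (hkn : k ≤ n) :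
    carry a b k = true ↔ ∃ i j, i ≤ k ∧ k ≤ j ∧ IsCarryChain n a b i j :=
  carry_true_iff_mem_carry_chain_general n a b ha hb k hkn
end

section
/- Suppose (a,b) generates a carry chain from i to j, and define the isolated inputs a' and b' by a' k = a k and b' k = b k for i-1 ≤ k ≤ j-1, and a' k = b' k = false for all other k. Then the pair (a',b') generates the carry chain from i to j and generates no other carry chain; that is, 𝒞(a',b') = {(i,j)}. -/
/-!
Inside the window `[i-1, j-1]` the isolated inputs coincide with `a, b`, and at `j` they are both
`false`, so they still generate the chain from `i` to `j`. Conversely, a chain from `p` to `q`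
needs `a' (p-1) = true`, which puts `p-1` in the window; it cannot lie in `[i, j-1]`, where
`a' ≠ b'`, so `p = i`. Finally a chain is determined by its start: its end is the first position
from the start on where the two inputs agree.
-/

namespace IsCarryChain

variable {n : ℕ} {a b a' b' : ℕ → Bool} {i j p q : ℕ}

theorem of_eqOn (h : IsCarryChain n a b i j) (ha : Set.EqOn a' a (Set.Icc (i - 1) (j - 1)))
    (hb : Set.EqOn b' b (Set.Icc (i - 1) (j - 1))) (hj : a' j = b' j) :
    IsCarryChain n a' b' i j := by
  obtain ⟨hi, hij, hjn, hai, hbi, hne, -⟩ := h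
  have hstart : i - 1 ∈ Set.Icc (i - 1) (j - 1) := ⟨le_rfl, by omega⟩
  refine ⟨hi, hij, hjn, (ha hstart).trans hai, (hb hstart).trans hbi, fun k hik hkj => ?_, hj⟩
  have hk : k ∈ Set.Icc (i - 1) (j - 1) := ⟨by omega, hkj⟩
  rw [ha hk, hb hk]
  exact hne k hik hkj

theorem right_unique (h : IsCarryChain n a b i j) (hq : IsCarryChain n a b i q) : q = j := by
  have not_lt_end : ∀ {j q}, IsCarryChain n a b i j → IsCarryChain n a b i q → ¬q < j :=
    fun ⟨_, _, _, _, _, hne, _⟩ ⟨_, hiq, _, _, _, _, heq⟩ hqj => hne _ hiq (by omega) heq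
  exact le_antisymm (not_lt.1 (not_lt_end hq h)) (not_lt.1 (not_lt_end h hq))

theorem eq_of_support_subset (h : IsCarryChain n a b i j)
    (ha : ∀ k, k ∉ Set.Icc (i - 1) (j - 1) → a k = false) (hpq : IsCarryChain n a b p q) :
    p = i ∧ q = j := by
  have hpi : p = i := by
    obtain ⟨hp, -, -, hap, hbp, -, -⟩ := hpq
    obtain ⟨hi, -, -, -, -, hne, -⟩ := h
    have hwindow : p - 1 ∈ Set.Icc (i - 1) (j - 1) := by
      by_contra hout
      simp [ha _ hout] at hap
    by_contra hpi
    exact hne (p - 1) (by have := hwindow.1; omega) hwindow.2 (hap.trans hbp.symm)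
  subst hpi
  exact ⟨rfl, h.right_unique hpq⟩

end IsCarryChain

theorem isolated_inputs_generate_unique_chain_general
    (n : ℕ) (a b : ℕ → Bool)
    (i j : ℕ) (hchain : IsCarryChain n a b i j)
    (a' b' : ℕ → Bool)
    (ha'₁ : ∀ k, i - 1 ≤ k → k ≤ j - 1 → a' k = a k)
    (ha'₂ : ∀ k, ¬(i - 1 ≤ k ∧ k ≤ j - 1) → a' k = false)
    (hb'₁ : ∀ k, i - 1 ≤ k → k ≤ j - 1 → b' k = b k)
    (hb'₂ : ∀ k, ¬(i - 1 ≤ k ∧ k ≤ j - 1) → b' k = false) :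
    ∀ p q, IsCarryChain n a' b' p q ↔ (p, q) = (i, j) := by
  have hj : ¬(i - 1 ≤ j ∧ j ≤ j - 1) := by
    have : 1 ≤ i ∧ i ≤ j := ⟨hchain.1, hchain.2.1⟩
    omega
  have hisolated : IsCarryChain n a' b' i j :=
    hchain.of_eqOn (fun k hk => ha'₁ k hk.1 hk.2) (fun k hk => hb'₁ k hk.1 hk.2)
      ((ha'₂ j hj).trans (hb'₂ j hj).symm)
  intro p q
  constructor
  · intro hpq
    obtain ⟨rfl, rfl⟩ := hisolated.eq_of_support_subset ha'₂ hpq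
    rfl
  · rintro ⟨⟩
    exact hisolated

/-- Isolating a carry chain: if `(a,b)` generates a carry chain from `i` to `j`, and
`a'`, `b'` agree with `a`, `b` on positions `i-1 ≤ k ≤ j-1` and are `false` elsewhere,
then `(a',b')` generates exactly the carry chain from `i` to `j` and no other, i.e.
`𝒞(a',b') = {(i,j)}`. -/
theorem isolated_inputs_generate_unique_chain
    (n : ℕ) (hn : 1 ≤ n) (a b : ℕ → Bool)
    (ha : ∀ k, n ≤ k → a k = false) (hb : ∀ k, n ≤ k → b k = false)
    (i j : ℕ) (hchain : IsCarryChain n a b i j)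
    (a' b' : ℕ → Bool)
    (ha'₁ : ∀ k, i - 1 ≤ k → k ≤ j - 1 → a' k = a k)
    (ha'₂ : ∀ k, ¬(i - 1 ≤ k ∧ k ≤ j - 1) → a' k = false)
    (hb'₁ : ∀ k, i - 1 ≤ k → k ≤ j - 1 → b' k = b k)
    (hb'₂ : ∀ k, ¬(i - 1 ≤ k ∧ k ≤ j - 1) → b' k = false) :
    ∀ p q, IsCarryChain n a' b' p q ↔ (p, q) = (i, j) :=
  isolated_inputs_generate_unique_chain_general n a b i j hchain a' b' ha'₁ ha'₂ hb'₁ hb'₂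
end

section
/- Let c' be a conservative pseudo-carry for (a,b), suppose the set {k : c k ≠ c' k} is nonempty, let k₀ be its largest element, and let (i,j) be the (unique) carry chain generated by (a,b) with i ≤ k₀ ≤ j. Then val(s) ≠ val(s'), and val(s) > val(s') if and only if k₀ = j (equivalently, val(s) < val(s') if and only if k₀ < j). Thus the sign of the total error val(s) − val(s') is determined by the leftmost (highest-position) erroneous carry chain. -/
/-- The pseudo sum bits: `s' k = a k ⊕ b k ⊕ c' k`. -/
def pseudoSumBit (a b c' : ℕ → Bool) (k : ℕ) : Bool :=
  Bool.xor (Bool.xor (a k) (b k)) (c' k)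

/-- The numerical value of a bit vector on positions `0, …, n`. -/
def val (n : ℕ) (s : ℕ → Bool) : ℕ :=
  ∑ k ∈ Finset.range (n + 1), if s k then 2 ^ k else 0

/-! A wrong carry flips exactly its own sum bit. Hence the true and pseudo sums agree above
the highest error `k₀`, and differ at `k₀`, where conservativity forces `c k₀ = 1`,
`c' k₀ = 0`. The sum with the one at `k₀` is the larger, because the bits below `k₀` are worth
less than `2 ^ k₀` in total; the true sum bit there is `1` exactly when `a k₀ = b k₀`, i.e.
when `k₀` is the end `j` of its carry chain. -/

theorem sum_range_ite_two_pow_lt (s : ℕ → Bool) (m : ℕ) :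
    ∑ k ∈ Finset.range m, (if s k then 2 ^ k else 0) < 2 ^ m := by
  induction m with
  | zero => simp
  | succ m ih =>
    rw [Finset.sum_range_succ, pow_succ]
    split_ifs <;> omega

theorem val_lt_val_of_eq_above {n m : ℕ} {s t : ℕ → Bool} (hmn : m ≤ n)
    (hs : s m = true) (ht : t m = false) (habove : ∀ k, m < k → t k = s k) :
    val n t < val n s := by
  have hsplit : ∀ u : ℕ → Bool, val n u =
      (∑ k ∈ Finset.range m, if u k then 2 ^ k else 0) + (if u m then 2 ^ m else 0) +
        ∑ k ∈ Finset.Ico (m + 1) (n + 1), if u k then 2 ^ k else 0 := fun u => by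
    rw [val, ← Finset.sum_range_add_sum_Ico _ (Nat.succ_le_succ hmn), Finset.sum_range_succ]
  have hhigh : ∑ k ∈ Finset.Ico (m + 1) (n + 1), (if t k then 2 ^ k else 0) =
      ∑ k ∈ Finset.Ico (m + 1) (n + 1), if s k then 2 ^ k else 0 :=
    Finset.sum_congr rfl fun k hk => by rw [habove k (Finset.mem_Ico.1 hk).1]
  rw [hsplit t, hsplit s, hhigh, hs, ht]
  have := sum_range_ite_two_pow_lt t m
  simp only [Bool.false_eq_true, if_true, if_false]
  omega

theorem sumBit_eq_pseudoSumBit {a b c' : ℕ → Bool} {k : ℕ} (h : carry a b k = c' k) :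
    sumBit a b k = pseudoSumBit a b c' k := by
  rw [sumBit, pseudoSumBit, h]

theorem sumBit_of_carry_eq_true {a b : ℕ → Bool} {k : ℕ} (h : carry a b k = true) :
    sumBit a b k = (a k == b k) := by
  rw [sumBit, h]
  cases a k <;> cases b k <;> rfl

theorem pseudoSumBit_of_eq_false {a b c' : ℕ → Bool} {k : ℕ} (h : c' k = false) :
    pseudoSumBit a b c' k = (a k != b k) := by
  rw [pseudoSumBit, h]
  cases a k <;> cases b k <;> rfl

theorem IsCarryChain.eq_right_iff {n i j k : ℕ} {a b : ℕ → Bool}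
    (hchain : IsCarryChain n a b i j) (hik : i ≤ k) (hkj : k ≤ j) : k = j ↔ a k = b k := by
  obtain ⟨-, -, -, -, -, hdiff, hj⟩ := hchain
  refine ⟨fun h => h ▸ hj, fun hab => ?_⟩
  by_contra hne
  exact hdiff k hik (by omega) hab

theorem sign_of_error_determined_by_leftmost_chain_general
    (n : ℕ) (a b : ℕ → Bool)
    (c' : ℕ → Bool)
    (hcons : ∀ k, c' k = true → carry a b k = true)
    (k₀ : ℕ) (hk₀ : carry a b k₀ ≠ c' k₀)
    (hk₀max : ∀ k, carry a b k ≠ c' k → k ≤ k₀)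
    (i j : ℕ) (hchain : IsCarryChain n a b i j) (hik : i ≤ k₀) (hkj : k₀ ≤ j) :
    val n (sumBit a b) ≠ val n (pseudoSumBit a b c') ∧
      (val n (pseudoSumBit a b c') < val n (sumBit a b) ↔ k₀ = j) := by
  obtain ⟨hc, hc'⟩ : carry a b k₀ = true ∧ c' k₀ = false := by
    cases h : c' k₀
    · exact ⟨by simpa [h] using hk₀, rfl⟩
    · exact absurd ((hcons k₀ h).trans h.symm) hk₀
  have hk₀n : k₀ ≤ n := hkj.trans hchain.2.2.1
  have hagree : ∀ k, k₀ < k → pseudoSumBit a b c' k = sumBit a b k := fun k hk =>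
    (sumBit_eq_pseudoSumBit (not_not.1 fun h => (hk₀max k h).not_gt hk)).symm
  rw [hchain.eq_right_iff hik hkj]
  by_cases hab : a k₀ = b k₀
  · have hlt := val_lt_val_of_eq_above hk₀n (by simp [sumBit_of_carry_eq_true hc, hab])
      (by simp [pseudoSumBit_of_eq_false hc', hab]) hagree
    exact ⟨hlt.ne', iff_of_true hlt hab⟩
  · have hlt := val_lt_val_of_eq_above hk₀n (by simp [pseudoSumBit_of_eq_false hc', hab])
      (by simp [sumBit_of_carry_eq_true hc, hab]) fun k hk => (hagree k hk).symm
    exact ⟨hlt.ne, iff_of_false hlt.not_gt hab⟩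

/-- The sign of the total error is determined by the leftmost (highest-position)
erroneous carry chain: if `k₀` is the largest position with `c k₀ ≠ c' k₀` and
`(i,j)` is the carry chain containing `k₀`, then `val s ≠ val s'`, and
`val s > val s'` iff `k₀ = j`. -/
theorem sign_of_error_determined_by_leftmost_chain
    (n : ℕ) (hn : 1 ≤ n) (a b : ℕ → Bool)
    (ha : ∀ k, n ≤ k → a k = false) (hb : ∀ k, n ≤ k → b k = false)
    (c' : ℕ → Bool) (hc'0 : c' 0 = false)
    (hcons : ∀ k, c' k = true → carry a b k = true)
    (k₀ : ℕ) (hk₀ : carry a b k₀ ≠ c' k₀)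
    (hk₀max : ∀ k, carry a b k ≠ c' k → k ≤ k₀)
    (i j : ℕ) (hchain : IsCarryChain n a b i j) (hik : i ≤ k₀) (hkj : k₀ ≤ j) :
    val n (sumBit a b) ≠ val n (pseudoSumBit a b c') ∧
      (val n (pseudoSumBit a b c') < val n (sumBit a b) ↔ k₀ = j) :=
  sign_of_error_determined_by_leftmost_chain_general n a b c' hcons k₀ hk₀ hk₀max i j hchain hik hkj
end

section
/- Suppose (a,b) generates a carry chain from i to j and the pseudo-carry c' satisfies: c' m = c m for every m not in the interval [k+1, j], and c' m = false for every m with k+1 ≤ m ≤ j, for some k with i ≤ k+1 ≤ j (this models a ripple-carry adder in which the carry has not yet propagated beyond position k). Then val(s) − val(s') = 2^j − ∑_{ℓ=k+1}^{j-1} 2^ℓ > 0; in particular, in a pseudo-adder based on the ripple-carry adder the error contributed by any carry chain is nonnegative. -/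
/-- The numerical value (as an integer) of a bit vector on positions `0, …, n`. -/
def valZ (n : ℕ) (s : ℕ → Bool) : ℤ :=
  ∑ k ∈ Finset.range (n + 1), if s k then (2 : ℤ) ^ k else 0

/-!
Outside `[k+1, j]` the true and the pseudo sum agree bit by bit. Inside, the true carry is set
(generated at `i - 1` and propagated by every position with `a m ≠ b m`) while the pseudo-carry is
not, so position `j`, where `a j = b j`, loses the bit `2 ^ j`, and every position `k < m < j`,
where `a m ≠ b m`, gains `2 ^ m`. The geometric sum leaves an error of exactly `2 ^ (k + 1)`.
-/

theorem IsCarryChain.carry_eq_true {n : ℕ} {a b : ℕ → Bool} {i j : ℕ}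
    (h : IsCarryChain n a b i j) {m : ℕ} (him : i ≤ m) (hmj : m ≤ j) : carry a b m = true := by
  obtain ⟨hi1, -, -, hai, hbi, hprop, -⟩ := h
  induction m, him using Nat.le_induction with
  | base =>
    obtain ⟨p, rfl⟩ : ∃ p, i = p + 1 := ⟨i - 1, by omega⟩
    simp_all [carry]
  | succ m him ih =>
    have hc : carry a b m = true := ih (by omega)
    have hab : a m ≠ b m := hprop m him (by omega)
    cases ham : a m <;> cases hbm : b m <;> simp_all [carry]

theorem valZ_sub_valZ_eq_sum_Ico {n p q : ℕ} {s t : ℕ → Bool} (hq : q ≤ n + 1)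
    (hst : ∀ m, m < p ∨ q ≤ m → s m = t m) :
    valZ n s - valZ n t =
      ∑ m ∈ Finset.Ico p q, ((if s m then (2 : ℤ) ^ m else 0) - if t m then 2 ^ m else 0) := by
  rw [valZ, valZ, ← Finset.sum_sub_distrib, Finset.range_eq_Ico]
  refine (Finset.sum_subset (Finset.Ico_subset_Ico (Nat.zero_le p) hq) ?_).symm
  intro m _ hm
  rw [Finset.mem_Ico, not_and_or, not_le, not_lt] at hm
  rw [hst m hm, sub_self]

theorem sumBit_sub_pseudoSumBit_of_carry_dropped {a b c' : ℕ → Bool} {m : ℕ}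
    (hc : carry a b m = true) (hc' : c' m = false) :
    ((if sumBit a b m then (2 : ℤ) ^ m else 0) - if pseudoSumBit a b c' m then 2 ^ m else 0) =
      if a m = b m then 2 ^ m else -2 ^ m := by
  cases ham : a m <;> cases hbm : b m <;> simp [sumBit, pseudoSumBit, ham, hbm, hc, hc']

theorem rca_chain_error_nonneg_general
    (n : ℕ) (a b : ℕ → Bool)
    (c' : ℕ → Bool)
    (i j k : ℕ) (hchain : IsCarryChain n a b i j)
    (hik : i ≤ k + 1) (hkj : k + 1 ≤ j)
    (hout : ∀ m, m < k + 1 ∨ j < m → c' m = carry a b m)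
    (hin : ∀ m, k + 1 ≤ m → m ≤ j → c' m = false) :
    valZ n (sumBit a b) - valZ n (pseudoSumBit a b c') =
        2 ^ j - ∑ ℓ ∈ Finset.Ico (k + 1) j, (2 : ℤ) ^ ℓ ∧
      0 < valZ n (sumBit a b) - valZ n (pseudoSumBit a b c') := by
  have hbit : ∀ m, k + 1 ≤ m → m ≤ j →
      ((if sumBit a b m then (2 : ℤ) ^ m else 0) - if pseudoSumBit a b c' m then 2 ^ m else 0) =
        if a m = b m then 2 ^ m else -2 ^ m := fun m hkm hmj =>
    sumBit_sub_pseudoSumBit_of_carry_dropped (hchain.carry_eq_true (by omega) hmj) (hin m hkm hmj)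
  obtain ⟨-, -, hjn, -, -, hprop, hjeq⟩ := hchain
  have hval : valZ n (sumBit a b) - valZ n (pseudoSumBit a b c') =
      2 ^ j - ∑ ℓ ∈ Finset.Ico (k + 1) j, (2 : ℤ) ^ ℓ := by
    rw [valZ_sub_valZ_eq_sum_Ico (p := k + 1) (q := j + 1) (by omega)
        fun m hm => by simp [sumBit, pseudoSumBit, hout m (by omega)],
      Finset.sum_Ico_succ_top hkj, hbit j hkj le_rfl, if_pos hjeq,
      sub_eq_neg_add, ← Finset.sum_neg_distrib]
    refine congrArg (· + _) (Finset.sum_congr rfl fun m hm => ?_)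
    rw [Finset.mem_Ico] at hm
    rw [hbit m hm.1 hm.2.le, if_neg (hprop m (by omega) (by omega))]
  have hgeom : ∑ ℓ ∈ Finset.Ico (k + 1) j, (2 : ℤ) ^ ℓ = 2 ^ j - 2 ^ (k + 1) := by
    simpa using geom_sum_Ico_mul (2 : ℤ) hkj
  refine ⟨hval, ?_⟩
  rw [hval, hgeom, sub_sub_cancel]
  positivity

/-- In a ripple-carry-based pseudo-adder, the error contributed by a carry chain is
nonnegative: if the carry of an `i`-`j` carry chain has not propagated beyond
position `k` (so `c' m = c m` off `[k+1, j]` and `c' m = false` on `[k+1, j]`), then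
`val s − val s' = 2^j − ∑_{ℓ=k+1}^{j-1} 2^ℓ > 0`. -/
theorem rca_chain_error_nonneg
    (n : ℕ) (hn : 1 ≤ n) (a b : ℕ → Bool)
    (ha : ∀ k, n ≤ k → a k = false) (hb : ∀ k, n ≤ k → b k = false)
    (c' : ℕ → Bool) (hc'0 : c' 0 = false)
    (i j k : ℕ) (hchain : IsCarryChain n a b i j)
    (hik : i ≤ k + 1) (hkj : k + 1 ≤ j)
    (hout : ∀ m, m < k + 1 ∨ j < m → c' m = carry a b m)
    (hin : ∀ m, k + 1 ≤ m → m ≤ j → c' m = false) :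
    valZ n (sumBit a b) - valZ n (pseudoSumBit a b c') =
        2 ^ j - ∑ ℓ ∈ Finset.Ico (k + 1) j, (2 : ℤ) ^ ℓ ∧
      0 < valZ n (sumBit a b) - valZ n (pseudoSumBit a b c') :=
  rca_chain_error_nonneg_general n a b c' i j k hchain hik hkj hout hin
end

section
/- Let σ be any finite set of pairs (i,j) with 1 ≤ i ≤ j ≤ n whose intervals [i,j] are pairwise disjoint. Then there exist n-bit inputs a, b (functions ℕ → Bool vanishing from position n on) such that the set of carry chains generated by (a,b) is exactly σ, i.e. 𝒞(a,b) = σ. -/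
/-!
Put a generate position (`a = b = 1`) just below the start of every chain of `σ`, propagate
positions (`a = 1`, `b = 0`) strictly inside it, and kill positions (`a = b = 0`) everywhere
else. Since the intervals of `σ` are disjoint, a generate position never lies inside a chain,
and the run of propagate positions starting at the beginning of a chain stops exactly at its
end, so each generate position starts exactly one carry chain, namely the one of `σ`.
-/

namespace ChainSet

variable (σ : Finset (ℕ × ℕ))

def Generates (k : ℕ) : Prop := ∃ p ∈ σ, p.1 = k + 1

def Propagates (k : ℕ) : Prop := ∃ p ∈ σ, p.1 ≤ k ∧ k < p.2

instance (k : ℕ) : Decidable (Generates σ k) := by unfold Generates; infer_instance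

instance (k : ℕ) : Decidable (Propagates σ k) := by unfold Propagates; infer_instance

def inputA (k : ℕ) : Bool := decide (Generates σ k ∨ Propagates σ k)

def inputB (k : ℕ) : Bool := decide (Generates σ k)

variable {σ}

theorem propagates_iff_lt_of_mem_Icc
    (hdisj : (σ : Set (ℕ × ℕ)).PairwiseDisjoint fun p => Finset.Icc p.1 p.2)
    {p : ℕ × ℕ} (hp : p ∈ σ) {k : ℕ} (hk : k ∈ Finset.Icc p.1 p.2) :
    Propagates σ k ↔ k < p.2 := by
  refine ⟨?_, fun hlt => ⟨p, hp, (Finset.mem_Icc.mp hk).1, hlt⟩⟩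
  rintro ⟨q, hq, hqk, hkq⟩
  obtain rfl : q = p :=
    hdisj.elim_finset hq hp k (Finset.mem_Icc.mpr ⟨hqk, hkq.le⟩) hk
  exact hkq

theorem not_propagates_of_generates
    (hdisj : (σ : Set (ℕ × ℕ)).PairwiseDisjoint fun p => Finset.Icc p.1 p.2)
    (hle : ∀ p ∈ σ, p.1 ≤ p.2) {k : ℕ} (hgen : Generates σ k) : ¬Propagates σ k := by
  rintro ⟨q, hq, hqk, hkq⟩
  obtain ⟨p, hp, hpk⟩ := hgen
  obtain rfl : p = q := hdisj.elim_finset hp hq (k + 1)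
    (Finset.mem_Icc.mpr ⟨hpk.le, hpk ▸ hle p hp⟩) (Finset.mem_Icc.mpr ⟨by omega, hkq⟩)
  omega

theorem inputB_eq_true_iff {k : ℕ} : inputB σ k = true ↔ Generates σ k :=
  decide_eq_true_iff

theorem inputA_eq_true_of_generates {k : ℕ} (hgen : Generates σ k) : inputA σ k = true :=
  decide_eq_true (Or.inl hgen)

theorem inputA_eq_inputB_iff
    (hdisj : (σ : Set (ℕ × ℕ)).PairwiseDisjoint fun p => Finset.Icc p.1 p.2)
    (hle : ∀ p ∈ σ, p.1 ≤ p.2) {k : ℕ} :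
    inputA σ k = inputB σ k ↔ ¬Propagates σ k := by
  have := @not_propagates_of_generates _ hdisj hle k
  simp only [inputA, inputB, decide_eq_decide]
  tauto

theorem inputA_eq_false_of_le {n : ℕ} (hσ : ∀ p ∈ σ, p.1 ≤ p.2 ∧ p.2 ≤ n) {k : ℕ}
    (hk : n ≤ k) : inputA σ k = false := by
  refine decide_eq_false (not_or.mpr ⟨?_, ?_⟩) <;> rintro ⟨p, hp, hpk⟩ <;>
    have := hσ p hp <;> omega

theorem inputB_eq_false_of_le {n : ℕ} (hσ : ∀ p ∈ σ, p.1 ≤ p.2 ∧ p.2 ≤ n) {k : ℕ}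
    (hk : n ≤ k) : inputB σ k = false := by
  refine decide_eq_false fun hgen => ?_
  simpa [inputA_eq_false_of_le hσ hk] using inputA_eq_true_of_generates hgen

theorem isCarryChain_iff {n : ℕ} (hσ : ∀ p ∈ σ, 1 ≤ p.1 ∧ p.1 ≤ p.2 ∧ p.2 ≤ n)
    (hdisj : (σ : Set (ℕ × ℕ)).PairwiseDisjoint fun p => Finset.Icc p.1 p.2) {i j : ℕ} :
    IsCarryChain n (inputA σ) (inputB σ) i j ↔ (i, j) ∈ σ := by
  have hle : ∀ p ∈ σ, p.1 ≤ p.2 := fun p hp => (hσ p hp).2.1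
  simp only [IsCarryChain, ne_eq, inputA_eq_inputB_iff hdisj hle, not_not]
  constructor
  · rintro ⟨hi, hij, -, -, hgen, hmid, hend⟩
    obtain ⟨⟨i', m⟩, hp, hi'⟩ := inputB_eq_true_iff.mp hgen
    obtain rfl : i = i' := by dsimp only at hi'; omega
    have him : i ≤ m := hle _ hp
    obtain rfl : j = m := le_antisymm
      (not_lt.mp fun hmj => lt_irrefl m <| (propagates_iff_lt_of_mem_Icc hdisj hp
        (Finset.mem_Icc.mpr ⟨him, le_rfl⟩)).mp (hmid m him (by omega)))
      (not_lt.mp fun hjm => hend <| (propagates_iff_lt_of_mem_Icc hdisj hp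
        (Finset.mem_Icc.mpr ⟨hij, hjm.le⟩)).mpr hjm)
    exact hp
  · intro hmem
    obtain ⟨hi, hij, hjn⟩ := hσ _ hmem
    have hgen : Generates σ (i - 1) := ⟨(i, j), hmem, by omega⟩
    refine ⟨hi, hij, hjn, inputA_eq_true_of_generates hgen, inputB_eq_true_iff.mpr hgen,
      fun k hik hkj => ?_, ?_⟩
    · exact (propagates_iff_lt_of_mem_Icc hdisj hmem
        (Finset.mem_Icc.mpr ⟨hik, by omega⟩)).mpr (by omega)
    · rw [propagates_iff_lt_of_mem_Icc hdisj hmem (Finset.mem_Icc.mpr ⟨hij, le_rfl⟩)]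
      exact lt_irrefl j

end ChainSet

theorem nonoverlapping_chains_realizable_general
    (n : ℕ) (σ : Finset (ℕ × ℕ))
    (hσ : ∀ p ∈ σ, 1 ≤ p.1 ∧ p.1 ≤ p.2 ∧ p.2 ≤ n)
    (hdisj : ∀ p ∈ σ, ∀ q ∈ σ, p ≠ q →
      Disjoint (Finset.Icc p.1 p.2) (Finset.Icc q.1 q.2)) :
    ∃ a b : ℕ → Bool,
      (∀ k, n ≤ k → a k = false) ∧ (∀ k, n ≤ k → b k = false) ∧
      ∀ i j, IsCarryChain n a b i j ↔ (i, j) ∈ σ := by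
  have hbound : ∀ p ∈ σ, p.1 ≤ p.2 ∧ p.2 ≤ n := fun p hp => (hσ p hp).2
  exact ⟨ChainSet.inputA σ, ChainSet.inputB σ,
    fun _ => ChainSet.inputA_eq_false_of_le hbound,
    fun _ => ChainSet.inputB_eq_false_of_le hbound,
    fun _ _ => ChainSet.isCarryChain_iff hσ hdisj⟩

/-- Every finite set of pairwise non-overlapping carry chains within `[1,n]` is
realized: there exist `n`-bit inputs `(a,b)` whose set of generated carry chains is
exactly `σ`. -/
theorem nonoverlapping_chains_realizable
    (n : ℕ) (hn : 1 ≤ n) (σ : Finset (ℕ × ℕ))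
    (hσ : ∀ p ∈ σ, 1 ≤ p.1 ∧ p.1 ≤ p.2 ∧ p.2 ≤ n)
    (hdisj : ∀ p ∈ σ, ∀ q ∈ σ, p ≠ q →
      Disjoint (Finset.Icc p.1 p.2) (Finset.Icc q.1 q.2)) :
    ∃ a b : ℕ → Bool,
      (∀ k, n ≤ k → a k = false) ∧ (∀ k, n ≤ k → b k = false) ∧
      ∀ i j, IsCarryChain n a b i j ↔ (i, j) ∈ σ :=
  nonoverlapping_chains_realizable_general n σ hσ hdisj
end

section
/- Let E : ℕ × ℕ → ℤ assign an error to each carry chain. Let w_max (respectively w_min) be the maximum (respectively minimum) of ∑_{C ∈ σ} E C over all finite sets σ of pairs (i,j) with 1 ≤ i ≤ j ≤ n whose intervals [i,j] are pairwise disjoint (including the empty set, of weight 0). Then the maximum over all n-bit input pairs (a,b) of |∑_{C ∈ 𝒞(a,b)} E C| equals max(−w_min, w_max). -/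
instance (n : ℕ) (a b : ℕ → Bool) (i j : ℕ) : Decidable (IsCarryChain n a b i j) := by
  have h : IsCarryChain n a b i j ↔
      (1 ≤ i ∧ i ≤ j ∧ j ≤ n ∧ a (i - 1) = true ∧ b (i - 1) = true ∧
        (∀ k ∈ Finset.Icc i (j - 1), a k ≠ b k) ∧ a j = b j) := by
    simp only [IsCarryChain, Finset.mem_Icc, and_imp]
  rw [h]
  infer_instance

/-- `𝒞(a,b)`: the finite set of all carry chains generated by `(a,b)`. -/
def chainSet (n : ℕ) (a b : ℕ → Bool) : Finset (ℕ × ℕ) :=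
  (Finset.Icc 1 n ×ˢ Finset.Icc 1 n).filter fun p => IsCarryChain n a b p.1 p.2

/-!
The carry chains of an input pair are pairwise disjoint intervals of `[1, n]`, and conversely
every family of pairwise disjoint intervals of `[1, n]` is the chain set of some input pair:
put `a = b = 1` just below each interval `[i, j]`, `a = 1, b = 0` on `i, …, j - 1`, and `0`
everywhere else. So the signed total errors are exactly the weights of disjoint interval
families, and the largest absolute value of a set of integers with least element `w_min` and
greatest element `w_max` is `max (-w_min) w_max`.
-/

open Finset

theorem IsGreatest.abs_image_max_neg {α : Type*} [AddCommGroup α] [LinearOrder α]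
    [IsOrderedAddMonoid α] {S : Set α} {M m : α} (hM : IsGreatest S M) (hm : IsLeast S m) :
    IsGreatest ((|·|) '' S) (max (-m) M) := by
  have hmM : m ≤ M := hM.2 hm.1
  refine ⟨?_, ?_⟩
  · rcases le_total (-m) M with h | h
    · have hM0 : 0 ≤ M := neg_le_self_iff.1 ((neg_le_neg hmM).trans h)
      exact ⟨M, hM.1, by simp only [abs_of_nonneg hM0, max_eq_right h]⟩
    · have hm0 : m ≤ 0 := le_neg_self_iff.1 (hmM.trans h)
      exact ⟨m, hm.1, by simp only [abs_of_nonpos hm0, max_eq_left h]⟩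
  · rintro _ ⟨x, hx, rfl⟩
    exact abs_le.2 ⟨neg_le.2 ((neg_le_neg (hm.2 hx)).trans (le_max_left _ _)),
      (hM.2 hx).trans (le_max_right _ _)⟩

variable {n : ℕ}

section ChainSet

variable {a b : ℕ → Bool}

/-- A chain cannot start or end strictly inside another one: at its start bit `i - 1` and at
its end bit `j` we have `a = b`, while `a ≠ b` inside any chain. -/
theorem IsCarryChain.eq_of_mem_Icc {i j i' j' k : ℕ} (h : IsCarryChain n a b i j)
    (h' : IsCarryChain n a b i' j') (hk : k ∈ Icc i j) (hk' : k ∈ Icc i' j') :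
    i = i' ∧ j = j' := by
  obtain ⟨hi, -, -, ha, hb, hmid, hend⟩ := h
  obtain ⟨hi', -, -, ha', hb', hmid', hend'⟩ := h'
  rw [mem_Icc] at hk hk'
  have hii' : i = i' := by
    rcases lt_trichotomy i i' with hlt | heq | hgt
    · exact absurd (ha'.trans hb'.symm) (hmid (i' - 1) (by omega) (by omega))
    · exact heq
    · exact absurd (ha.trans hb.symm) (hmid' (i - 1) (by omega) (by omega))
  refine ⟨hii', ?_⟩
  rcases lt_trichotomy j j' with hlt | heq | hgt
  · exact absurd hend (hmid' j (by omega) (by omega))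
  · exact heq
  · exact absurd hend' (hmid j' (by omega) (by omega))

theorem mem_chainSet {i j : ℕ} : (i, j) ∈ chainSet n a b ↔ IsCarryChain n a b i j := by
  refine ⟨fun h => (mem_filter.1 h).2, fun h => mem_filter.2 ⟨?_, h⟩⟩
  obtain ⟨hi, hij, hjn, -⟩ := h
  simp only [mem_product, mem_Icc]
  omega

theorem bounds_of_mem_chainSet {p : ℕ × ℕ} (hp : p ∈ chainSet n a b) :
    1 ≤ p.1 ∧ p.1 ≤ p.2 ∧ p.2 ≤ n :=
  let ⟨hi, hij, hjn, _⟩ := (mem_filter.1 hp).2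
  ⟨hi, hij, hjn⟩

theorem chainSet_pairwiseDisjoint :
    (chainSet n a b : Set (ℕ × ℕ)).PairwiseDisjoint fun p => Icc p.1 p.2 := by
  rintro ⟨i, j⟩ hp ⟨i', j'⟩ hq hne
  rw [Function.onFun, disjoint_left]
  intro k hk hk'
  obtain ⟨rfl, rfl⟩ :=
    (mem_chainSet.1 (mem_coe.1 hp)).eq_of_mem_Icc (mem_chainSet.1 (mem_coe.1 hq)) hk hk'
  exact hne rfl

end ChainSet

section Realization

variable {σ : Finset (ℕ × ℕ)}

def chainAugend (σ : Finset (ℕ × ℕ)) (k : ℕ) : Bool :=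
  decide ((∃ p ∈ σ, p.1 = k + 1) ∨ ∃ p ∈ σ, p.1 ≤ k ∧ k < p.2)

def chainAddend (σ : Finset (ℕ × ℕ)) (k : ℕ) : Bool :=
  decide (∃ p ∈ σ, p.1 = k + 1)

variable (hb : ∀ p ∈ σ, 1 ≤ p.1 ∧ p.1 ≤ p.2 ∧ p.2 ≤ n)
  (hd : (σ : Set (ℕ × ℕ)).PairwiseDisjoint fun p => Icc p.1 p.2)

include hb in
theorem chainAugend_eq_false {k : ℕ} (hk : n ≤ k) : chainAugend σ k = false := by
  rw [chainAugend, decide_eq_false_iff_not]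
  rintro (⟨p, hp, h⟩ | ⟨p, hp, h, h'⟩) <;> have := hb p hp <;> omega

include hb in
theorem chainAddend_eq_false {k : ℕ} (hk : n ≤ k) : chainAddend σ k = false := by
  rw [chainAddend, decide_eq_false_iff_not]
  rintro ⟨p, hp, h⟩
  have := hb p hp
  omega

include hb hd in
theorem chainAugend_ne_chainAddend_iff {k : ℕ} :
    chainAugend σ k ≠ chainAddend σ k ↔ ∃ p ∈ σ, p.1 ≤ k ∧ k < p.2 := by
  by_cases hstart : ∃ p ∈ σ, p.1 = k + 1
  · have hnot : ¬ ∃ q ∈ σ, q.1 ≤ k ∧ k < q.2 := by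
      rintro ⟨q, hq, hqk, hkq⟩
      obtain ⟨p, hp, hpk⟩ := hstart
      have hpq := hd.elim_finset hp hq (k + 1)
        (mem_Icc.2 ⟨hpk.le, hpk ▸ (hb p hp).2.1⟩) (mem_Icc.2 ⟨by omega, hkq⟩)
      subst hpq
      omega
    simp [chainAugend, chainAddend, hstart, hnot]
  · simp [chainAugend, chainAddend, hstart]

include hb hd in
theorem chainAugend_snd_eq_chainAddend {p : ℕ × ℕ} (hp : p ∈ σ) :
    chainAugend σ p.2 = chainAddend σ p.2 := by
  refine not_not.1 fun hne => ?_
  obtain ⟨q, hq, hqp, hpq⟩ := (chainAugend_ne_chainAddend_iff hb hd).1 hne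
  have hpq := hd.elim_finset hp hq p.2
    (mem_Icc.2 ⟨(hb p hp).2.1, le_rfl⟩) (mem_Icc.2 ⟨hqp, hpq.le⟩)
  subst hpq
  omega

include hb hd in
theorem chainSet_chainAugend_chainAddend : chainSet n (chainAugend σ) (chainAddend σ) = σ := by
  ext ⟨i, j⟩
  rw [mem_chainSet]
  constructor
  · rintro ⟨hi, hij, -, -, hstart, hmid, hend⟩
    obtain ⟨p, hp, hpi⟩ := decide_eq_true_iff.1 hstart
    have hpi : p.1 = i := by omega
    have hp12 := (hb p hp).2.1
    have hjp : j = p.2 := by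
      rcases lt_trichotomy j p.2 with hlt | heq | hgt
      · exact absurd hend ((chainAugend_ne_chainAddend_iff hb hd).2 ⟨p, hp, by omega, hlt⟩)
      · exact heq
      · exact absurd (chainAugend_snd_eq_chainAddend hb hd hp)
          (hmid p.2 (by omega) (by omega))
    rwa [show (i, j) = p from Prod.ext hpi.symm hjp]
  · intro hp
    obtain ⟨hi, hij, hjn⟩ := hb _ hp
    have hstart : ∃ p ∈ σ, p.1 = i - 1 + 1 := ⟨(i, j), hp, by simp only; omega⟩
    refine ⟨hi, hij, hjn, decide_eq_true (Or.inl hstart), decide_eq_true hstart,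
      fun k hik hkj => (chainAugend_ne_chainAddend_iff hb hd).2 ⟨(i, j), hp, hik, by omega⟩,
      chainAugend_snd_eq_chainAddend hb hd hp⟩

end Realization

theorem exists_chainSet_eq_iff {σ : Finset (ℕ × ℕ)} :
    (∃ a b : ℕ → Bool, (∀ k, n ≤ k → a k = false) ∧ (∀ k, n ≤ k → b k = false) ∧
        chainSet n a b = σ) ↔
      (∀ p ∈ σ, 1 ≤ p.1 ∧ p.1 ≤ p.2 ∧ p.2 ≤ n) ∧
        (σ : Set (ℕ × ℕ)).PairwiseDisjoint fun p => Icc p.1 p.2 := by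
  constructor
  · rintro ⟨a, b, -, -, rfl⟩
    exact ⟨fun p => bounds_of_mem_chainSet, chainSet_pairwiseDisjoint⟩
  · rintro ⟨hb, hd⟩
    exact ⟨chainAugend σ, chainAddend σ, fun k => chainAugend_eq_false hb,
      fun k => chainAddend_eq_false hb, chainSet_chainAugend_chainAddend hb hd⟩

def disjointChainWeights (n : ℕ) (E : ℕ × ℕ → ℤ) : Set ℤ :=
  {w : ℤ | ∃ σ : Finset (ℕ × ℕ),
    (∀ p ∈ σ, 1 ≤ p.1 ∧ p.1 ≤ p.2 ∧ p.2 ≤ n) ∧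
    (σ : Set (ℕ × ℕ)).PairwiseDisjoint (fun p => Icc p.1 p.2) ∧
    w = ∑ C ∈ σ, E C}

theorem setOf_abs_error_eq_image_abs (E : ℕ × ℕ → ℤ) :
    {e : ℤ | ∃ a b : ℕ → Bool,
        (∀ k, n ≤ k → a k = false) ∧ (∀ k, n ≤ k → b k = false) ∧
        e = |∑ C ∈ chainSet n a b, E C|} = (|·|) '' disjointChainWeights n E := by
  ext e
  constructor
  · rintro ⟨a, b, ha, hb, rfl⟩
    obtain ⟨hbd, hd⟩ := exists_chainSet_eq_iff.1 ⟨a, b, ha, hb, rfl⟩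
    exact ⟨_, ⟨chainSet n a b, hbd, hd, rfl⟩, rfl⟩
  · rintro ⟨_, ⟨σ, hbd, hd, rfl⟩, rfl⟩
    obtain ⟨a, b, ha, hb, rfl⟩ := exists_chainSet_eq_iff.2 ⟨hbd, hd⟩
    exact ⟨a, b, ha, hb, rfl⟩

theorem max_abs_error_eq_max_neg_wmin_wmax_general
    (n : ℕ) (E : ℕ × ℕ → ℤ) (wmax wmin : ℤ)
    (hmax : IsGreatest {w : ℤ | ∃ σ : Finset (ℕ × ℕ),
        (∀ p ∈ σ, 1 ≤ p.1 ∧ p.1 ≤ p.2 ∧ p.2 ≤ n) ∧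
        (∀ p ∈ σ, ∀ q ∈ σ, p ≠ q →
          Disjoint (Finset.Icc p.1 p.2) (Finset.Icc q.1 q.2)) ∧
        w = ∑ C ∈ σ, E C} wmax)
    (hmin : IsLeast {w : ℤ | ∃ σ : Finset (ℕ × ℕ),
        (∀ p ∈ σ, 1 ≤ p.1 ∧ p.1 ≤ p.2 ∧ p.2 ≤ n) ∧
        (∀ p ∈ σ, ∀ q ∈ σ, p ≠ q →
          Disjoint (Finset.Icc p.1 p.2) (Finset.Icc q.1 q.2)) ∧
        w = ∑ C ∈ σ, E C} wmin) :
    IsGreatest {e : ℤ | ∃ a b : ℕ → Bool,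
        (∀ k, n ≤ k → a k = false) ∧ (∀ k, n ≤ k → b k = false) ∧
        e = |∑ C ∈ chainSet n a b, E C|}
      (max (-wmin) wmax) := by
  rw [setOf_abs_error_eq_image_abs]
  -- `hmax` and `hmin` are about `disjointChainWeights n E`, with `Set.PairwiseDisjoint` unfolded.
  exact hmax.abs_image_max_neg hmin

/-- The maximum absolute error over all `n`-bit input pairs equals
`max (−w_min) w_max`, where `w_max` (resp. `w_min`) is the greatest (resp. least)
value of `∑_{C ∈ σ} E C` over all finite sets `σ` of carry chains in `[1,n]` with
pairwise disjoint intervals (including the empty set, of weight `0`). -/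
theorem max_abs_error_eq_max_neg_wmin_wmax
    (n : ℕ) (hn : 1 ≤ n) (E : ℕ × ℕ → ℤ) (wmax wmin : ℤ)
    (hmax : IsGreatest {w : ℤ | ∃ σ : Finset (ℕ × ℕ),
        (∀ p ∈ σ, 1 ≤ p.1 ∧ p.1 ≤ p.2 ∧ p.2 ≤ n) ∧
        (∀ p ∈ σ, ∀ q ∈ σ, p ≠ q →
          Disjoint (Finset.Icc p.1 p.2) (Finset.Icc q.1 q.2)) ∧
        w = ∑ C ∈ σ, E C} wmax)
    (hmin : IsLeast {w : ℤ | ∃ σ : Finset (ℕ × ℕ),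
        (∀ p ∈ σ, 1 ≤ p.1 ∧ p.1 ≤ p.2 ∧ p.2 ≤ n) ∧
        (∀ p ∈ σ, ∀ q ∈ σ, p ≠ q →
          Disjoint (Finset.Icc p.1 p.2) (Finset.Icc q.1 q.2)) ∧
        w = ∑ C ∈ σ, E C} wmin) :
    IsGreatest {e : ℤ | ∃ a b : ℕ → Bool,
        (∀ k, n ≤ k → a k = false) ∧ (∀ k, n ≤ k → b k = false) ∧
        e = |∑ C ∈ chainSet n a b, E C|}
      (max (-wmin) wmax) :=
  max_abs_error_eq_max_neg_wmin_wmax_general n E wmax wmin hmax hmin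
end
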